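/- Let k ≥ 3 and t ≥ 2. In the Jiang–Nešetřil hypergraph G_{k,t}, any two distinct vertices of degree 2 lying in a common edge are 2-connected, i.e., joined by two edge-disjoint Berge paths. -/
import Mathlib


/-- Vertex type of the Jiang–Nešetřil hypergraph `G_{k,t}` with `n = t*k`:
vertices `u_i`, `v_i` (for `i` modulo `n`) and `w_{i,j}` (for `j ∈ [k-3]`). -/
abbrev JNVert (n k : ℕ) := ZMod n ⊕ ZMod n ⊕ (ZMod n × Fin (k - 3))

def JNu (n k : ℕ) (i : ZMod n) : JNVert n k := Sum.inl i
def JNv (n k : ℕ) (i : ZMod n) : JNVert n k := Sum.inr (Sum.inl i)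
def JNw (n k : ℕ) (i : ZMod n) (j : Fin (k - 3)) : JNVert n k := Sum.inr (Sum.inr (i, j))

/-- The L-edge `E_i = {v_i, u_i, v_{i+1}, w_{i,1}, …, w_{i,k-3}}`. -/
def JNL (n k : ℕ) [NeZero n] (i : ZMod n) : Finset (JNVert n k) :=
  {JNv n k i, JNu n k i, JNv n k (i + 1)} ∪ Finset.univ.image (JNw n k i)

/-- The cyclic edge `E_{i,j} = {w_{i,j}, …, w_{i+k-1,j}}`. -/
def JNC (n k : ℕ) (i : ZMod n) (j : Fin (k - 3)) : Finset (JNVert n k) :=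
  (Finset.range k).image (fun m : ℕ => JNw n k (i + (m : ZMod n)) j)

/-- The edge set of `G_{k,t}`: all L-edges together with the cyclic edges
`E_{i,j}` for `j ∈ [k-3]` and `i = j + s*k`, `s ∈ [t]`. -/
def JNedges (t k : ℕ) [NeZero (t * k)] : Finset (Finset (JNVert (t * k) k)) :=
  Finset.univ.image (JNL (t * k) k) ∪
  Finset.univ.image (fun p : Fin t × Fin (k - 3) =>
    JNC (t * k) k ((((p.2 : ℕ) + 1) + (p.1 : ℕ) * k : ℕ) : ZMod (t * k)) p.2)

/-- The degree of a vertex: the number of edges containing it. -/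
def hDegree {V : Type*} [DecidableEq V] (E : Finset (Finset V)) (v : V) : ℕ :=
  (E.filter (fun e => v ∈ e)).card

/-- A Berge path from `u` to `w`. -/
def IsBergePath {V : Type*} [DecidableEq V] (E : Finset (Finset V)) (u w : V)
    (vs : List V) (es : List (Finset V)) : Prop :=
  vs.Nodup ∧ es.Nodup ∧ (∀ e ∈ es, e ∈ E) ∧
  vs.length = es.length + 1 ∧ vs.head? = some u ∧ vs.getLast? = some w ∧
  ∀ i, i < es.length → ∃ a b e, vs[i]? = some a ∧ vs[i+1]? = some b ∧
    es[i]? = some e ∧ a ∈ e ∧ b ∈ e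

/-- `t`-connectivity: `t` pairwise edge-disjoint Berge paths. -/
def TConnected {V : Type*} [DecidableEq V] (E : Finset (Finset V)) (t : ℕ) (u w : V) : Prop :=
  ∃ P : Fin t → List V × List (Finset V),
    (∀ a, IsBergePath E u w (P a).1 (P a).2) ∧
    ∀ a b, a ≠ b → ∀ e ∈ (P a).2, e ∉ (P b).2

set_option linter.unusedSectionVars false

section Core
variable {V : Type*} [DecidableEq V] {E : Finset (Finset V)} {u w x y : V}
  {vs : List V} {es : List (Finset V)} {e : Finset V}

lemma bp_nil (x : V) : IsBergePath E x x [x] [] := by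
  refine ⟨by simp, by simp, by simp, by simp, by simp, by simp, by simp⟩

lemma bp_cons (hx : x ∈ e) (hy : y ∈ e) (he : e ∈ E) (hp : IsBergePath E y w vs es)
    (hxvs : x ∉ vs) (hees : e ∉ es) : IsBergePath E x w (x :: vs) (e :: es) := by
  obtain ⟨h1, h2, h3, h4, h5, h6, h7⟩ := hp
  refine ⟨List.nodup_cons.2 ⟨hxvs, h1⟩, List.nodup_cons.2 ⟨hees, h2⟩, ?_, by simp [h4], ?_, ?_, ?_⟩
  · intro f hf; rcases List.mem_cons.1 hf with rfl | hf; exact he; exact h3 f hf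
  · simp
  · match vs, h5 with
    | a :: l, _ => rw [List.getLast?_cons_cons]; exact h6
  · intro i hi
    rcases i with _ | i
    · refine ⟨x, y, e, by simp, ?_, by simp, hx, hy⟩
      simpa [List.getElem?_cons_succ, ← List.head?_eq_getElem?] using h5
    · simp only [List.length_cons] at hi
      obtain ⟨a, b, f, ha, hb, hf, hae, hbe⟩ := h7 i (by omega)
      exact ⟨a, b, f, by simpa using ha, by simpa using hb, by simpa using hf, hae, hbe⟩

lemma bp_reverse (hp : IsBergePath E u w vs es) :
    IsBergePath E w u vs.reverse es.reverse := by
  obtain ⟨h1, h2, h3, h4, h5, h6, h7⟩ := hp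
  refine ⟨List.nodup_reverse.2 h1, List.nodup_reverse.2 h2, by simpa using h3, by simpa using h4,
    by rwa [List.head?_reverse], by rwa [List.getLast?_reverse], ?_⟩
  intro i hi
  simp only [List.length_reverse] at hi
  set L := es.length
  obtain ⟨a, b, f, ha, hb, hf, hae, hbe⟩ := h7 (L - 1 - i) (by omega)
  refine ⟨b, a, f, ?_, ?_, ?_, hbe, hae⟩
  · rw [List.getElem?_reverse (by omega)]
    rw [show vs.length - 1 - i = L - 1 - i + 1 by omega] at *
    exact hb
  · rw [List.getElem?_reverse (by omega)]
    rw [show vs.length - 1 - (i+1) = L - 1 - i by omega]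
    exact ha
  · rw [List.getElem?_reverse (by omega)]
    exact hf

lemma bp_snoc (hp : IsBergePath E u w vs es) (hw : w ∈ e) (hy : y ∈ e) (he : e ∈ E)
    (hyvs : y ∉ vs) (hees : e ∉ es) : IsBergePath E u y (vs ++ [y]) (es ++ [e]) := by
  have := bp_reverse (bp_cons hy hw he (bp_reverse hp) (by simpa using hyvs) (by simpa using hees))
  simpa using this

lemma tconnected_symm {a b : V} (h : TConnected E 2 a b) : TConnected E 2 b a := by
  obtain ⟨P, hP, hD⟩ := h
  exact ⟨fun i => ((P i).1.reverse, (P i).2.reverse),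
    fun i => bp_reverse (hP i),
    fun i j hij f hf hf' => hD i j hij f (by simpa using hf) (by simpa using hf')⟩

lemma tconnected_of_two (p1 p2 : List V × List (Finset V))
    (h1 : IsBergePath E u w p1.1 p1.2) (h2 : IsBergePath E u w p2.1 p2.2)
    (hd : ∀ e ∈ p1.2, e ∉ p2.2) : TConnected E 2 u w := by
  refine ⟨fun i => if i = 0 then p1 else p2, fun i => by dsimp; split <;> assumption, ?_⟩
  intro a b hab f hfa hfb
  have : ∀ (c d : Fin 2), c ≠ d → (c = 0 ∧ d ≠ 0) ∨ (c ≠ 0 ∧ d = 0) := by decide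
  rcases this a b hab with ⟨h1', h2'⟩ | ⟨h1', h2'⟩ <;> simp [h1', h2'] at hfa hfb
  · exact hd f hfa hfb
  · exact hd f hfb hfa
end Core

section JN
variable {n k : ℕ} [NeZero n]

@[simp] lemma JNv_inj {i i' : ZMod n} : JNv n k i = JNv n k i' ↔ i = i' := by simp [JNv]
@[simp] lemma JNw_inj {i i' : ZMod n} {j j' : Fin (k-3)} :
    JNw n k i j = JNw n k i' j' ↔ i = i' ∧ j = j' := by simp [JNw, Prod.ext_iff]
@[simp] lemma JNv_ne_JNw {i i' : ZMod n} {j : Fin (k-3)} : JNv n k i ≠ JNw n k i' j := by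
  simp [JNv, JNw]
@[simp] lemma JNw_ne_JNv {i i' : ZMod n} {j : Fin (k-3)} : JNw n k i j ≠ JNv n k i' := by
  simp [JNv, JNw]

lemma mem_JNL {x : JNVert n k} {i : ZMod n} :
    x ∈ JNL n k i ↔ x = JNv n k i ∨ x = JNu n k i ∨ x = JNv n k (i+1) ∨ ∃ j, x = JNw n k i j := by
  simp [JNL, eq_comm]

@[simp] lemma v_mem_JNL {i : ZMod n} : JNv n k i ∈ JNL n k i := mem_JNL.2 (Or.inl rfl)
@[simp] lemma v1_mem_JNL {i : ZMod n} : JNv n k (i+1) ∈ JNL n k i :=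
  mem_JNL.2 (Or.inr (Or.inr (Or.inl rfl)))
@[simp] lemma u_mem_JNL {i : ZMod n} : JNu n k i ∈ JNL n k i := mem_JNL.2 (Or.inr (Or.inl rfl))
@[simp] lemma w_mem_JNL {i : ZMod n} {j : Fin (k-3)} : JNw n k i j ∈ JNL n k i :=
  mem_JNL.2 (Or.inr (Or.inr (Or.inr ⟨j, rfl⟩)))

lemma u_mem_JNL_iff {i i' : ZMod n} : JNu n k i ∈ JNL n k i' ↔ i = i' := by
  simp [mem_JNL, JNu, JNv, JNw]

lemma JNL_inj {i i' : ZMod n} (h : JNL n k i = JNL n k i') : i = i' := by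
  have := u_mem_JNL (n := n) (k := k) (i := i)
  rw [h, u_mem_JNL_iff] at this; exact this

lemma mem_JNC {x : JNVert n k} {c : ZMod n} {j : Fin (k-3)} :
    x ∈ JNC n k c j ↔ ∃ m < k, x = JNw n k (c + m) j := by
  simp [JNC, eq_comm]

lemma JNC_ne_JNL {c i : ZMod n} {j : Fin (k-3)} : JNC n k c j ≠ JNL n k i := by
  intro h
  have : JNu n k i ∈ JNC n k c j := h ▸ u_mem_JNL
  rw [mem_JNC] at this
  obtain ⟨m, _, hm⟩ := this
  simp [JNu, JNw] at hm

lemma w_mem_JNC_coord {x : ZMod n} {j j' : Fin (k-3)} {c : ZMod n}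
    (h : JNw n k x j ∈ JNC n k c j') : j = j' := by
  rw [mem_JNC] at h; obtain ⟨m, _, hm⟩ := h; exact (JNw_inj.1 hm).2

lemma zmod_cast_inj {r r' : ℕ} (hr : r < n) (hr' : r' < n) (h : (r : ZMod n) = r') : r = r' := by
  have := congrArg ZMod.val h
  rwa [ZMod.val_cast_of_lt hr, ZMod.val_cast_of_lt hr'] at this

lemma zmod_add_cancel {s : ZMod n} {r r' : ℕ} (hr : r < n) (hr' : r' < n)
    (h : s + (r : ZMod n) = s + r') : r = r' :=
  zmod_cast_inj hr hr' (by linear_combination h)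

end JN

/-- Vertices of the ascending arc `v_s, v_{s+1}, …, v_{s+m}`. -/
def arcVs (n k : ℕ) : ℕ → ZMod n → List (JNVert n k)
  | 0, s => [JNv n k s]
  | m+1, s => JNv n k s :: arcVs n k m (s+1)

/-- Edges of the ascending arc: `E_s, …, E_{s+m-1}`. -/
def arcEs (n k : ℕ) [NeZero n] : ℕ → ZMod n → List (Finset (JNVert n k))
  | 0, _ => []
  | m+1, s => JNL n k s :: arcEs n k m (s+1)

section Arc
variable {n k : ℕ} [NeZero n]

lemma mem_arcVs {m : ℕ} {s : ZMod n} {x : JNVert n k} (h : x ∈ arcVs n k m s) :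
    ∃ r ≤ m, x = JNv n k (s + r) := by
  induction m generalizing s with
  | zero => exact ⟨0, le_refl 0, by simpa [arcVs] using h⟩
  | succ m ih =>
    rcases List.mem_cons.1 h with rfl | h
    · exact ⟨0, by omega, by simp⟩
    · obtain ⟨r, hr, hx⟩ := ih h
      exact ⟨r+1, by omega, by rw [hx]; push_cast; ring_nf⟩

lemma mem_arcEs {m : ℕ} {s : ZMod n} {e : Finset (JNVert n k)} (h : e ∈ arcEs n k m s) :
    ∃ r < m, e = JNL n k (s + r) := by
  induction m generalizing s with
  | zero => simp [arcEs] at h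
  | succ m ih =>
    rcases List.mem_cons.1 h with rfl | h
    · exact ⟨0, by omega, by simp⟩
    · obtain ⟨r, hr, hx⟩ := ih h
      exact ⟨r+1, by omega, by rw [hx]; push_cast; ring_nf⟩

lemma bp_arc {E : Finset (Finset (JNVert n k))} (hE : ∀ i, JNL n k i ∈ E)
    {m : ℕ} (hm : m + 1 ≤ n) (s : ZMod n) :
    IsBergePath E (JNv n k s) (JNv n k (s + m)) (arcVs n k m s) (arcEs n k m s) := by
  induction m generalizing s with
  | zero => simpa [arcVs, arcEs] using bp_nil (E := E) (JNv n k s)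
  | succ m ih =>
    have ihp := ih (by omega) (s + 1)
    have hend : s + 1 + (m : ZMod n) = s + ((m+1 : ℕ) : ZMod n) := by push_cast; ring
    rw [hend] at ihp
    refine bp_cons (e := JNL n k s) v_mem_JNL v1_mem_JNL (hE s) ihp ?_ ?_
    · intro h
      obtain ⟨r, hr, hx⟩ := mem_arcVs h
      rw [JNv_inj] at hx
      have : s + ((0:ℕ) : ZMod n) = s + ((r+1 : ℕ) : ZMod n) := by push_cast; push_cast at hx
                                                                   linear_combination hx
      have := zmod_add_cancel (by omega) (by omega) this
      omega
    · intro h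
      obtain ⟨r, hr, hx⟩ := mem_arcEs h
      have hx' := JNL_inj hx
      have : s + ((0:ℕ) : ZMod n) = s + ((r+1 : ℕ) : ZMod n) := by push_cast; push_cast at hx'
                                                                   linear_combination hx'
      have := zmod_add_cancel (by omega) (by omega) this
      omega

end Arc

section Run
variable {n k : ℕ} [NeZero n]

lemma zmod_val_sub (u v : ZMod n) : (u - v).val = (u.val + (n - v.val)) % n := by
  have h1 : u - v = (((u.val + (n - v.val)) : ℕ) : ZMod n) := by
    push_cast [Nat.cast_sub (ZMod.val_le v)]
    rw [ZMod.natCast_self, ZMod.natCast_rightInverse u, ZMod.natCast_rightInverse v]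
    ring
  rw [h1, ZMod.val_natCast]

/-- If `(g-s).val ≤ (x-s).val` then the ascending run `s, s+1, …` of length `(g-s).val`
avoids `x`. -/
lemma not_in_run {s g x : ZMod n} (h : (g - s).val ≤ (x - s).val) :
    ∀ r < (g - s).val, s + (r : ZMod n) ≠ x := by
  intro r hr he
  have hrn : r < n := lt_of_lt_of_le hr (le_of_lt (ZMod.val_lt _))
  have hxs : x - s = (r : ZMod n) := by linear_combination -he
  have : (x - s).val = r := by rw [hxs, ZMod.val_natCast, Nat.mod_eq_of_lt hrn]
  omega

lemma not_in_run_end {s g : ZMod n} : ∀ r < (g - s).val, s + (r : ZMod n) ≠ g :=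
  not_in_run (le_refl _)

lemma not_in_run_pred {s g : ZMod n} (hn : 1 < n) :
    ∀ r < (g - s).val, s + (r : ZMod n) ≠ s - 1 := by
  apply not_in_run
  have h2 : (1 : ZMod n).val = 1 := by
    have := ZMod.val_one_eq_one_mod n
    rw [this, Nat.mod_eq_of_lt hn]
  have h3 : ((0:ZMod n) - 1).val = n - 1 := by
    rw [zmod_val_sub, ZMod.val_zero, h2, Nat.zero_add, Nat.mod_eq_of_lt (by omega)]
  have h1 : (s - 1 - s) = (0 : ZMod n) - 1 := by ring
  rw [h1, h3]
  have := ZMod.val_lt (g - s)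
  omega

lemma JNL_not_in_arc {s g x : ZMod n}
    (h : (g - s).val ≤ (x - s).val) : JNL n k x ∉ arcEs n k ((g - s).val) s := by
  intro hmem
  obtain ⟨r, hr, he⟩ := mem_arcEs hmem
  exact not_in_run h r hr (JNL_inj he.symm)

lemma JNL_pred_not_in_arc {s g : ZMod n} (hn : 1 < n) :
    JNL n k (s - 1) ∉ arcEs n k ((g - s).val) s := by
  intro hmem
  obtain ⟨r, hr, he⟩ := mem_arcEs hmem
  exact not_in_run_pred hn r hr (JNL_inj he.symm)

lemma JNL_end_not_in_arc {s g : ZMod n} :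
    JNL n k g ∉ arcEs n k ((g - s).val) s :=
  JNL_not_in_arc (le_refl _)

lemma JNw_not_in_arc {m : ℕ} {s i : ZMod n} {j : Fin (k-3)} :
    JNw n k i j ∉ arcVs n k m s := by
  intro hmem
  obtain ⟨r, _, he⟩ := mem_arcVs hmem
  exact JNw_ne_JNv (by rw [he])

lemma bp_arc' {E : Finset (Finset (JNVert n k))} (hE : ∀ i, JNL n k i ∈ E) (s g : ZMod n) :
    IsBergePath E (JNv n k s) (JNv n k g)
      (arcVs n k ((g - s).val) s) (arcEs n k ((g - s).val) s) := by
  have := bp_arc hE (m := (g - s).val) (ZMod.val_lt (g - s)) s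
  rwa [show s + (((g - s).val : ℕ) : ZMod n) = g by
    rw [ZMod.natCast_rightInverse (g - s)]; ring] at this

end Run

section Blocks
variable {t k : ℕ} [NeZero (t * k)]

lemma exists_block (hk : 3 ≤ k) (ht : 1 ≤ t) (i : ZMod (t*k)) (j : Fin (k-3)) :
    ∃ c : ZMod (t*k),
      JNC (t*k) k c j ∈ JNedges t k ∧ JNw (t*k) k i j ∈ JNC (t*k) k c j := by
  have hn : 0 < t * k := Nat.pos_of_ne_zero (NeZero.ne _)
  have hk0 : 0 < k := by omega
  have hkn : k ≤ t * k := Nat.le_mul_of_pos_left k (by omega)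
  have hj := j.isLt
  set A := (i.val + t * k - ((j : ℕ) + 1)) % (t * k) with hA
  have hAn : A < t * k := Nat.mod_lt _ hn
  have hs : A / k < t := by
    rw [Nat.div_lt_iff_lt_mul hk0]; exact hAn
  refine ⟨(((j : ℕ) + 1) + (A / k) * k : ℕ), ?_, ?_⟩
  · apply Finset.mem_union_right
    exact Finset.mem_image.2 ⟨(⟨A / k, hs⟩, j), Finset.mem_univ _, rfl⟩
  · rw [mem_JNC]
    refine ⟨A % k, Nat.mod_lt _ hk0, ?_⟩
    rw [JNw_inj]
    refine ⟨?_, rfl⟩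
    have h1 : (A : ZMod (t*k)) = i - (((j : ℕ) + 1 : ℕ) : ZMod (t*k)) := by
      rw [hA, ZMod.natCast_mod, Nat.cast_sub (by omega), Nat.cast_add,
        ZMod.natCast_rightInverse i, ZMod.natCast_self]
      ring
    have hAm : (A / k) * k + A % k = A := by
      rw [Nat.mul_comm]; exact Nat.div_add_mod A k
    have h2 : ((j : ℕ) + 1) + (A / k) * k + (A % k) = ((j : ℕ) + 1) + A := by
      rw [Nat.add_assoc, hAm]
    rw [← Nat.cast_add, h2, Nat.cast_add, h1]
    ring

lemma exists_companion (hk : 1 ≤ k) (ht : 1 ≤ t) (c : ZMod (t*k)) (j : Fin (k-3))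
    (T : Finset (ZMod (t*k))) (hT : T.card < k) :
    ∃ a, a ∉ T ∧ JNw (t*k) k a j ∈ JNC (t*k) k c j := by
  have hkn : k ≤ t * k := Nat.le_mul_of_pos_left k (by omega)
  set S : Finset (ZMod (t*k)) := (Finset.range k).image (fun m : ℕ => c + (m : ZMod (t*k)))
    with hS
  have hcard : S.card = k := by
    rw [hS, Finset.card_image_of_injOn, Finset.card_range]
    intro m hm m' hm' he
    simp only [Finset.coe_range, Set.mem_Iio] at hm hm'
    exact zmod_add_cancel (by omega) (by omega) he
  have : ¬ (S ⊆ T) := by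
    intro hsub
    have := Finset.card_le_card hsub
    omega
  obtain ⟨a, haS, haT⟩ := Finset.not_subset.1 this
  refine ⟨a, haT, ?_⟩
  rw [hS, Finset.mem_image] at haS
  obtain ⟨m, hm, rfl⟩ := haS
  exact mem_JNC.2 ⟨m, Finset.mem_range.1 hm, rfl⟩

lemma JNL_mem_edges (i : ZMod (t * k)) : JNL (t * k) k i ∈ JNedges t k :=
  Finset.mem_union_left _ (Finset.mem_image.2 ⟨i, Finset.mem_univ _, rfl⟩)

end Blocks

section Cases
variable {t k : ℕ} [NeZero (t * k)]

lemma zmod_succ_ne {n : ℕ} [NeZero n] (hn : 1 < n) (i : ZMod n) : i + 1 ≠ i := by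
  intro h
  have h' : i + ((1:ℕ) : ZMod n) = i + ((0:ℕ) : ZMod n) := by push_cast; rw [add_zero]; exact h
  have := zmod_add_cancel (by omega) (by omega) h'
  omega

lemma caseA (hk : 3 ≤ k) (ht : 2 ≤ t) (i : ZMod (t*k)) :
    TConnected (JNedges t k) 2 (JNv (t*k) k (i+1)) (JNv (t*k) k i) := by
  have hn : 1 < t * k := by nlinarith
  refine tconnected_of_two ([JNv (t*k) k (i+1), JNv (t*k) k i], [JNL (t*k) k i])
    (arcVs (t*k) k ((i - (i+1)).val) (i+1), arcEs (t*k) k ((i - (i+1)).val) (i+1)) ?_ ?_ ?_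
  · refine bp_cons v1_mem_JNL v_mem_JNL (JNL_mem_edges i) (bp_nil _) ?_ (by simp)
    simp only [List.mem_singleton, JNv_inj]
    exact zmod_succ_ne hn i
  · exact bp_arc' JNL_mem_edges (i+1) i
  · intro e he
    simp only [List.mem_singleton] at he
    subst he
    have h2 := JNL_pred_not_in_arc (n := t*k) (k := k) (s := i+1) (g := i) hn
    rw [show (i+1) - (1 : ZMod (t*k)) = i by ring] at h2
    exact h2

lemma JNC_not_in_arcEs {n k : ℕ} [NeZero n] {c s : ZMod n} {j : Fin (k-3)} {m : ℕ} :
    JNC n k c j ∉ arcEs n k m s := by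
  intro h
  obtain ⟨r, _, he⟩ := mem_arcEs h
  exact JNC_ne_JNL he

lemma JNL_self_pred_not_in_arc {n k : ℕ} [NeZero n] (hn : 1 < n) {a g : ZMod n} :
    JNL n k a ∉ arcEs n k ((g - (a+1)).val) (a+1) := by
  have h2 := JNL_pred_not_in_arc (n := n) (k := k) (s := a+1) (g := g) hn
  rwa [show (a+1) - (1 : ZMod n) = a by ring] at h2

lemma caseB1 (hk : 3 ≤ k) (ht : 2 ≤ t) (i : ZMod (t*k)) (j : Fin (k-3)) :
    TConnected (JNedges t k) 2 (JNw (t*k) k i j) (JNv (t*k) k i) := by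
  have hn : 1 < t * k := by nlinarith
  obtain ⟨c, hce, hwc⟩ := exists_block hk (by omega) i j
  obtain ⟨a, haT, hwa⟩ := exists_companion (by omega) (by omega) c j {i}
    (by rw [Finset.card_singleton]; omega)
  have hai : a ≠ i := by simpa using haT
  have inner : IsBergePath (JNedges t k) (JNw (t*k) k a j) (JNv (t*k) k i)
      (JNw (t*k) k a j :: arcVs (t*k) k ((i - (a+1)).val) (a+1))
      (JNL (t*k) k a :: arcEs (t*k) k ((i - (a+1)).val) (a+1)) :=
    bp_cons w_mem_JNL v1_mem_JNL (JNL_mem_edges a) (bp_arc' JNL_mem_edges (a+1) i)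
      JNw_not_in_arc (JNL_self_pred_not_in_arc hn)
  refine tconnected_of_two ([JNw (t*k) k i j, JNv (t*k) k i], [JNL (t*k) k i]) (_, _)
    (bp_cons w_mem_JNL v_mem_JNL (JNL_mem_edges i) (bp_nil _) (by simp) (by simp))
    (bp_cons hwc hwa hce inner ?_ ?_) ?_
  · intro h
    rcases List.mem_cons.1 h with h | h
    · exact hai (JNw_inj.1 h).1.symm
    · exact JNw_not_in_arc h
  · intro h
    rcases List.mem_cons.1 h with h | h
    · exact JNC_ne_JNL h
    · exact JNC_not_in_arcEs h
  · intro e he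
    simp only [List.mem_singleton] at he
    subst he
    intro h
    rcases List.mem_cons.1 h with h | h
    · exact JNC_ne_JNL h.symm
    rcases List.mem_cons.1 h with h | h
    · exact hai (JNL_inj h.symm)
    · exact JNL_end_not_in_arc h

lemma caseB2 (hk : 3 ≤ k) (ht : 2 ≤ t) (i : ZMod (t*k)) (j : Fin (k-3)) :
    TConnected (JNedges t k) 2 (JNv (t*k) k (i+1)) (JNw (t*k) k i j) := by
  have hn : 1 < t * k := by nlinarith
  obtain ⟨c, hce, hwc⟩ := exists_block hk (by omega) i j
  obtain ⟨a, haT, hwa⟩ := exists_companion (by omega) (by omega) c j {i}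
    (by rw [Finset.card_singleton]; omega)
  have hai : a ≠ i := by simpa using haT
  have harc := bp_arc' (n := t*k) (k := k) JNL_mem_edges (i+1) a
  have hyv : JNw (t*k) k a j ∉ arcVs (t*k) k ((a - (i+1)).val) (i+1) := JNw_not_in_arc
  have inner := bp_snoc harc v_mem_JNL w_mem_JNL (JNL_mem_edges a)
    hyv (JNL_end_not_in_arc (s := i+1))
  have hyv2 : JNw (t*k) k i j ∉ arcVs (t*k) k ((a - (i+1)).val) (i+1) ++ [JNw (t*k) k a j] := by
    intro h
    rcases List.mem_append.1 h with h | h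
    · exact JNw_not_in_arc h
    · simp only [List.mem_singleton, JNw_inj] at h
      exact hai h.1.symm
  have hee2 : JNC (t*k) k c j ∉ arcEs (t*k) k ((a - (i+1)).val) (i+1) ++ [JNL (t*k) k a] := by
    intro h
    rcases List.mem_append.1 h with h | h
    · exact JNC_not_in_arcEs h
    · simp only [List.mem_singleton] at h
      exact JNC_ne_JNL h
  have outer := bp_snoc inner hwa hwc hce hyv2 hee2
  refine tconnected_of_two ([JNv (t*k) k (i+1), JNw (t*k) k i j], [JNL (t*k) k i]) (_, _)
    (bp_cons v1_mem_JNL w_mem_JNL (JNL_mem_edges i) (bp_nil _) (by simp) (by simp))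
    outer ?_
  intro e he
  simp only [List.mem_singleton] at he
  subst he
  intro h
  rcases List.mem_append.1 h with h | h
  · rcases List.mem_append.1 h with h | h
    · exact JNL_self_pred_not_in_arc hn h
    · simp only [List.mem_singleton] at h
      exact hai (JNL_inj h.symm)
  · simp only [List.mem_singleton] at h
    exact JNC_ne_JNL h.symm

lemma zmod_val_pos {n : ℕ} [NeZero n] {x : ZMod n} (h : x ≠ 0) : 1 ≤ x.val := by
  rcases Nat.eq_zero_or_pos x.val with h0 | h0
  · exact absurd ((ZMod.val_eq_zero x).1 h0) h
  · exact h0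

lemma zmod_val_inj {n : ℕ} [NeZero n] {x y : ZMod n} (h : x.val = y.val) : x = y := by
  rw [← ZMod.natCast_rightInverse x, ← ZMod.natCast_rightInverse y, h]

lemma run_dir {n : ℕ} [NeZero n] (hn : 1 < n) {i a b : ZMod n}
    (hai : a ≠ i) (hlt : (a - i).val < (b - i).val) :
    (b - (a+1)).val ≤ (i - (a+1)).val := by
  set x := (a - i).val with hx
  set y := (b - i).val with hy
  have hx1 : 1 ≤ x := zmod_val_pos (by intro h0; exact hai (by linear_combination h0))
  have hyn : y < n := ZMod.val_lt _
  have e1 : i - (a+1) = ((n - 1 - x : ℕ) : ZMod n) := by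
    have hxc : ((x : ℕ) : ZMod n) = a - i := ZMod.natCast_rightInverse _
    rw [Nat.cast_sub (by omega), Nat.cast_sub (by omega), ZMod.natCast_self, hxc]
    push_cast
    ring
  have e2 : b - (a+1) = ((y - x - 1 : ℕ) : ZMod n) := by
    have hxc : ((x : ℕ) : ZMod n) = a - i := ZMod.natCast_rightInverse _
    have hyc : ((y : ℕ) : ZMod n) = b - i := ZMod.natCast_rightInverse _
    rw [Nat.cast_sub (by omega), Nat.cast_sub (by omega), hxc, hyc]
    push_cast
    ring
  rw [e1, e2, ZMod.val_natCast, ZMod.val_natCast,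
    Nat.mod_eq_of_lt (by omega), Nat.mod_eq_of_lt (by omega)]
  omega

lemma caseC1' (hk : 3 ≤ k) (ht : 2 ≤ t) {i a b c c' : ZMod (t*k)} {j j' : Fin (k-3)}
    (hjj : j ≠ j') (hai : a ≠ i) (hbi : b ≠ i) (hab : a ≠ b)
    (hlt : (a - i).val < (b - i).val)
    (hce : JNC (t*k) k c j ∈ JNedges t k) (hwc : JNw (t*k) k i j ∈ JNC (t*k) k c j)
    (hwa : JNw (t*k) k a j ∈ JNC (t*k) k c j)
    (hce' : JNC (t*k) k c' j' ∈ JNedges t k) (hwc' : JNw (t*k) k i j' ∈ JNC (t*k) k c' j')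
    (hwb : JNw (t*k) k b j' ∈ JNC (t*k) k c' j') :
    TConnected (JNedges t k) 2 (JNw (t*k) k i j) (JNw (t*k) k i j') := by
  have hn : 1 < t * k := by nlinarith
  have hCC : JNC (t*k) k c j ≠ JNC (t*k) k c' j' := by
    intro h
    exact hjj (w_mem_JNC_coord (h ▸ hwc))
  have q1 := bp_cons (E := JNedges t k) w_mem_JNL v1_mem_JNL (JNL_mem_edges a)
    (bp_arc' JNL_mem_edges (a+1) b) (JNw_not_in_arc (i := a) (j := j))
    (JNL_self_pred_not_in_arc hn)
  have q2 := bp_cons hwc hwa hce q1 ?_ ?_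
  · have q3 := bp_snoc q2 v_mem_JNL (w_mem_JNL (i := b) (j := j')) (JNL_mem_edges b) ?_ ?_
    · have q4 := bp_snoc q3 hwb hwc' hce' ?_ ?_
      · refine tconnected_of_two ([JNw (t*k) k i j, JNw (t*k) k i j'], [JNL (t*k) k i]) (_, _)
          (bp_cons w_mem_JNL w_mem_JNL (JNL_mem_edges i) (bp_nil _)
            (by simp only [List.mem_singleton, JNw_inj]; intro h; exact hjj h.2) (by simp)) q4 ?_
        intro e he
        simp only [List.mem_singleton] at he
        subst he
        intro h
        rcases List.mem_append.1 h with h | h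
        · rcases List.mem_append.1 h with h | h
          · rcases List.mem_cons.1 h with h | h
            · exact JNC_ne_JNL h.symm
            rcases List.mem_cons.1 h with h | h
            · exact hai (JNL_inj h.symm)
            · exact JNL_not_in_arc (run_dir hn hai hlt) h
          · simp only [List.mem_singleton] at h
            exact hbi (JNL_inj h.symm)
        · simp only [List.mem_singleton] at h
          exact JNC_ne_JNL h.symm
      · -- w i j' not in vertices of q3
        intro h
        rcases List.mem_append.1 h with h | h
        · rcases List.mem_cons.1 h with h | h
          · exact hjj ((JNw_inj.1 h).2.symm)
          rcases List.mem_cons.1 h with h | h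
          · exact hjj ((JNw_inj.1 h).2.symm)
          · exact JNw_not_in_arc h
        · simp only [List.mem_singleton, JNw_inj] at h
          exact hbi h.1.symm
      · -- JNC c' j' not in edges of q3
        intro h
        rcases List.mem_append.1 h with h | h
        · rcases List.mem_cons.1 h with h | h
          · exact hCC h.symm
          rcases List.mem_cons.1 h with h | h
          · exact JNC_ne_JNL h
          · exact JNC_not_in_arcEs h
        · simp only [List.mem_singleton] at h
          exact JNC_ne_JNL h
    · -- w b j' not in vertices of q2
      intro h
      rcases List.mem_cons.1 h with h | h
      · exact hjj ((JNw_inj.1 h).2).symm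
      rcases List.mem_cons.1 h with h | h
      · exact hjj ((JNw_inj.1 h).2).symm
      · exact JNw_not_in_arc h
    · -- JNL b not in edges of q2
      intro h
      rcases List.mem_cons.1 h with h | h
      · exact JNC_ne_JNL h.symm
      rcases List.mem_cons.1 h with h | h
      · exact hab (JNL_inj h).symm
      · exact JNL_end_not_in_arc h
  · -- w i j not in vertices of q1
    intro h
    rcases List.mem_cons.1 h with h | h
    · exact hai ((JNw_inj.1 h).1.symm)
    · exact JNw_not_in_arc h
  · -- JNC c j not in edges of q1
    intro h
    rcases List.mem_cons.1 h with h | h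
    · exact JNC_ne_JNL h
    · exact JNC_not_in_arcEs h

lemma caseC1 (hk : 3 ≤ k) (ht : 2 ≤ t) (i : ZMod (t*k)) {j j' : Fin (k-3)} (hjj : j ≠ j') :
    TConnected (JNedges t k) 2 (JNw (t*k) k i j) (JNw (t*k) k i j') := by
  obtain ⟨c, hce, hwc⟩ := exists_block hk (by omega) i j
  obtain ⟨c', hce', hwc'⟩ := exists_block hk (by omega) i j'
  obtain ⟨a, haT, hwa⟩ := exists_companion (by omega) (by omega) c j {i}
    (by rw [Finset.card_singleton]; omega)
  have hai : a ≠ i := by simpa using haT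
  obtain ⟨b, hbT, hwb⟩ := exists_companion (by omega) (by omega) c' j' {i, a}
    (lt_of_le_of_lt (Finset.card_insert_le _ _) (by rw [Finset.card_singleton]; omega))
  have hbi : b ≠ i := by intro h; exact hbT (by simp [h])
  have hba : b ≠ a := by intro h; exact hbT (by simp [h])
  have hvne : (a - i).val ≠ (b - i).val := by
    intro h
    have hab' : a = b := by linear_combination zmod_val_inj h
    exact hba hab'.symm
  rcases lt_or_gt_of_ne hvne with hlt | hlt
  · exact caseC1' hk ht hjj hai hbi (Ne.symm hba) hlt hce hwc hwa hce' hwc' hwb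
  · exact tconnected_symm
      (caseC1' hk ht (Ne.symm hjj) hbi hai hba hlt hce' hwc' hwb hce hwc hwa)

lemma caseC2 (hk : 3 ≤ k) (ht : 2 ≤ t) {i i'' c : ZMod (t*k)} {j : Fin (k-3)} (hii : i ≠ i'')
    (hce : JNC (t*k) k c j ∈ JNedges t k)
    (hw1 : JNw (t*k) k i j ∈ JNC (t*k) k c j) (hw2 : JNw (t*k) k i'' j ∈ JNC (t*k) k c j) :
    TConnected (JNedges t k) 2 (JNw (t*k) k i j) (JNw (t*k) k i'' j) := by
  have hn : 1 < t * k := by nlinarith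
  have q1 := bp_cons (E := JNedges t k) (w_mem_JNL (i := i) (j := j)) v1_mem_JNL
    (JNL_mem_edges i) (bp_arc' JNL_mem_edges (i+1) i'') JNw_not_in_arc
    (JNL_self_pred_not_in_arc hn)
  have q2 := bp_snoc q1 v_mem_JNL (w_mem_JNL (i := i'') (j := j)) (JNL_mem_edges i'') ?_ ?_
  · refine tconnected_of_two ([JNw (t*k) k i j, JNw (t*k) k i'' j], [JNC (t*k) k c j]) (_, _)
      (bp_cons hw1 hw2 hce (bp_nil _)
        (by simp only [List.mem_singleton, JNw_inj]; intro h; exact hii h.1) (by simp)) q2 ?_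
    intro e he
    simp only [List.mem_singleton] at he
    subst he
    intro h
    rcases List.mem_append.1 h with h | h
    · rcases List.mem_cons.1 h with h | h
      · exact JNC_ne_JNL h
      · exact JNC_not_in_arcEs h
    · simp only [List.mem_singleton] at h
      exact JNC_ne_JNL h
  · intro h
    rcases List.mem_cons.1 h with h | h
    · exact hii ((JNw_inj.1 h).1).symm
    · exact JNw_not_in_arc h
  · intro h
    rcases List.mem_cons.1 h with h | h
    · exact hii (JNL_inj h.symm)
    · exact JNL_end_not_in_arc h

lemma deg_inl (i : ZMod (t*k)) : hDegree (JNedges t k) (JNu (t*k) k i) ≤ 1 := by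
  rw [hDegree]
  apply Finset.card_le_one.2
  have key : ∀ e ∈ (JNedges t k).filter (fun e => JNu (t*k) k i ∈ e), e = JNL (t*k) k i := by
    intro e he
    rw [Finset.mem_filter] at he
    obtain ⟨he, hue⟩ := he
    rcases Finset.mem_union.1 he with h | h
    · obtain ⟨i', _, rfl⟩ := Finset.mem_image.1 h
      rw [u_mem_JNL_iff.1 hue]
    · obtain ⟨p, _, rfl⟩ := Finset.mem_image.1 h
      rw [mem_JNC] at hue
      obtain ⟨m, _, hm⟩ := hue
      exact absurd hm (by simp [JNu, JNw])
  intro e he e' he'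
  rw [key e he, key e' he']

end Cases


theorem degree_two_vertices_in_common_edge_two_connected (k t : ℕ) (hk : 3 ≤ k) (ht : 2 ≤ t)
    [NeZero (t * k)]
    (u v : JNVert (t * k) k) (huv : u ≠ v)
    (hdu : hDegree (JNedges t k) u = 2) (hdv : hDegree (JNedges t k) v = 2)
    (hcommon : ∃ e ∈ JNedges t k, u ∈ e ∧ v ∈ e) :
    TConnected (JNedges t k) 2 u v := by
  obtain ⟨e, he, hue, hve⟩ := hcommon
  rcases Finset.mem_union.1 he with h | h
  · obtain ⟨i0, _, rfl⟩ := Finset.mem_image.1 h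
    rcases mem_JNL.1 hue with hu | hu | hu | ⟨j, hu⟩ <;> subst hu <;>
      rcases mem_JNL.1 hve with hv | hv | hv | ⟨j2, hv⟩ <;> subst hv
    · exact absurd rfl huv
    · have := deg_inl (t := t) (k := k) i0; omega
    · exact tconnected_symm (caseA hk ht i0)
    · exact tconnected_symm (caseB1 hk ht i0 j2)
    · have := deg_inl (t := t) (k := k) i0; omega
    · have := deg_inl (t := t) (k := k) i0; omega
    · have := deg_inl (t := t) (k := k) i0; omega
    · have := deg_inl (t := t) (k := k) i0; omega
    · exact caseA hk ht i0
    · have := deg_inl (t := t) (k := k) i0; omega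
    · exact absurd rfl huv
    · exact caseB2 hk ht i0 j2
    · exact caseB1 hk ht i0 j
    · have := deg_inl (t := t) (k := k) i0; omega
    · exact tconnected_symm (caseB2 hk ht i0 j)
    · rcases eq_or_ne j j2 with rfl | hjj
      · exact absurd rfl huv
      · exact caseC1 hk ht i0 hjj
  · obtain ⟨p, _, rfl⟩ := Finset.mem_image.1 h
    rw [mem_JNC] at hue hve
    obtain ⟨m, _, hu⟩ := hue
    obtain ⟨m', _, hv⟩ := hve
    subst hu; subst hv
    set c : ZMod (t*k) := (((p.2 : ℕ) + 1 + (p.1 : ℕ) * k : ℕ) : ZMod (t*k)) with hc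
    have hii : c + (m : ZMod (t*k)) ≠ c + (m' : ZMod (t*k)) := by
      intro h; exact huv (by rw [h])
    exact caseC2 hk ht hii he
      (mem_JNC.2 ⟨m, by assumption, rfl⟩) (mem_JNC.2 ⟨m', by assumption, rfl⟩)
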